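/- Let A be a bounded selfadjoint operator on a complex Hilbert space H and let x ∈ H. Then the sequence (A^k x)_{k∈ℕ} is a Bessel sequence in H if and only if there exists C > 0 such that |⟨A^k x, x⟩| ≤ C/k for all integers k ≥ 1. -/

import Mathlib

/-!
Write `m k = ⟪A^k x, x⟫`. Self-adjointness gives `⟪A^n x, A^m x⟫ = m (n + m)`, so
`m (2k) = ‖A^k x‖²`.

(⇒) The norms `‖A^k x‖` are bounded (each is one term of a Bessel sum) and log-convex
(Cauchy–Schwarz on `m (2k + 2) = ⟪A^(k+2) x, A^k x⟫`), hence nonincreasing. The Bessel inequality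
at `v = A^k x`, restricted to the indices `j ≤ k` with `j ≡ k mod 2`, then gives
`(k + 1) ‖A^k x‖² ≤ 2C`, and `|m k| ≤ ‖A^(k - k/2) x‖ ‖A^(k/2) x‖ ≤ ‖A^(k/2) x‖²`.

(⇐) The Gram matrix `m (n + m)` is dominated entrywise by a multiple of the Hilbert matrix
`1 / (n + m + 1)`, which is bounded on `ℓ²` (Schur's test with weights `1 / √(m + 1)`). A bounded
Gram matrix means a bounded synthesis operator `c ↦ ∑ c j • y j`, and by duality a Bessel sequence.
-/

open MeasureTheory

/-- `y` is a Bessel sequence with Bessel bound `C`: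
`∑_j |⟨v, y_j⟩|² ≤ C‖v‖²` for all `v` (stated via finite partial sums). -/
def IsBesselSequenceWith {H : Type*} [NormedAddCommGroup H] [InnerProductSpace ℂ H]
    {ι : Type*} (y : ι → H) (C : ℝ) : Prop :=
  ∀ v : H, ∀ F : Finset ι, ∑ j ∈ F, ‖(inner ℂ v (y j) : ℂ)‖ ^ 2 ≤ C * ‖v‖ ^ 2

open Finset

-- Schur's test, with weight `p`.
theorem sum_sum_mul_le_of_row_sum_le {ι : Type*} (F : Finset ι) {K : ι → ι → ℝ} {p : ι → ℝ}
    {B : ℝ} (hK : ∀ i j, 0 ≤ K i j) (hK_symm : ∀ i j, K i j = K j i) (hp : ∀ i, 0 < p i)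
    (hrow : ∀ i ∈ F, ∑ j ∈ F, K i j * p j ≤ B * p i) (a : ι → ℝ) :
    ∑ i ∈ F, ∑ j ∈ F, K i j * a i * a j ≤ B * ∑ i ∈ F, a i ^ 2 := by
  set X : ι → ι → ℝ := fun i j => K i j * p j / p i * a i ^ 2
  have amgm (i j : ι) : K i j * a i * a j ≤ (X i j + X j i) / 2 := by
    have hpi := hp i
    have hpj := hp j
    have : (X i j + X j i) / 2 - K i j * a i * a j
        = K i j * (a i * p j - a j * p i) ^ 2 / (2 * p i * p j) := by
      simp only [X, hK_symm j i]
      field_simp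
      ring
    nlinarith [show 0 ≤ K i j * (a i * p j - a j * p i) ^ 2 / (2 * p i * p j) by
      have := hK i j; positivity]
  calc ∑ i ∈ F, ∑ j ∈ F, K i j * a i * a j
      ≤ ∑ i ∈ F, ∑ j ∈ F, (X i j + X j i) / 2 := by gcongr with i _ j _; exact amgm i j
    _ = ∑ i ∈ F, ∑ j ∈ F, X i j := by
      simp only [← sum_div, sum_add_distrib]
      rw [sum_comm (f := fun i j => X j i)]
      ring
    _ = ∑ i ∈ F, (∑ j ∈ F, K i j * p j) / p i * a i ^ 2 := by
      simp only [X, sum_div, sum_mul]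
    _ ≤ ∑ i ∈ F, B * a i ^ 2 := by
      gcongr with i hi
      rw [div_le_iff₀ (hp i)]
      exact hrow i hi
    _ = B * ∑ i ∈ F, a i ^ 2 := (mul_sum ..).symm

theorem sum_range_inv_sqrt_succ_le (N : ℕ) : ∑ m ∈ range N, (√(m + 1 : ℝ))⁻¹ ≤ 2 * √N := by
  have step (m : ℕ) : (√(m + 1 : ℝ))⁻¹ ≤ 2 * √((m + 1 : ℕ) : ℝ) - 2 * √(m : ℝ) := by
    push_cast
    have h1 : 0 < √(m + 1 : ℝ) := by positivity
    have hs : √(m + 1 : ℝ) ^ 2 = √(m : ℝ) ^ 2 + 1 := by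
      rw [Real.sq_sqrt (by positivity), Real.sq_sqrt (by positivity)]
    rw [inv_le_iff_one_le_mul₀ h1]
    nlinarith [Real.sqrt_nonneg (m : ℝ)]
  calc ∑ m ∈ range N, (√(m + 1 : ℝ))⁻¹
      ≤ ∑ m ∈ range N, (2 * √((m + 1 : ℕ) : ℝ) - 2 * √(m : ℝ)) := sum_le_sum fun m _ => step m
    _ = 2 * √N := by rw [sum_range_sub (fun m : ℕ => 2 * √(m : ℝ))]; simp

theorem sum_Ico_inv_mul_sqrt_le {a : ℕ} (ha : 0 < a) (b : ℕ) :
    ∑ m ∈ Ico a b, ((m + 1 : ℝ) * √(m + 1))⁻¹ ≤ 2 * (√a)⁻¹ := by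
  have step (m : ℕ) (hm : 0 < m) :
      ((m + 1 : ℝ) * √(m + 1))⁻¹ ≤ 2 * (√(m : ℝ))⁻¹ - 2 * (√((m + 1 : ℕ) : ℝ))⁻¹ := by
    push_cast
    rw [← Real.sq_sqrt (by positivity : (0 : ℝ) ≤ m + 1)]
    set s := √(m : ℝ)
    set t := √(m + 1 : ℝ)
    have hs : 0 < s := by positivity
    have ht : 0 < t := by positivity
    have hst : t ^ 2 = s ^ 2 + 1 := by
      rw [Real.sq_sqrt (by positivity), Real.sq_sqrt (by positivity)]
    rw [Real.sqrt_sq ht.le, ← sub_nonneg]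
    have : 2 * s⁻¹ - 2 * t⁻¹ - (t ^ 2 * t)⁻¹ = (2 * t ^ 2 * (t - s) - s) / (s * t ^ 3) := by
      field_simp
    rw [this]
    apply div_nonneg _ (by positivity)
    nlinarith [mul_pos hs ht, sq_nonneg (t - s)]
  rcases le_or_gt a b with hab | hab
  · calc ∑ m ∈ Ico a b, ((m + 1 : ℝ) * √(m + 1))⁻¹
        ≤ ∑ m ∈ Ico a b, (2 * (√(m : ℝ))⁻¹ - 2 * (√((m + 1 : ℕ) : ℝ))⁻¹) :=
          sum_le_sum fun m hm => step m (by grind)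
      _ = 2 * (√a)⁻¹ - 2 * (√b)⁻¹ := by
          rw [show 2 * (√(a : ℝ))⁻¹ - 2 * (√(b : ℝ))⁻¹ = -(2 * (√(b : ℝ))⁻¹) - -(2 * (√(a : ℝ))⁻¹)
            by ring, ← sum_Ico_sub (fun m : ℕ => -(2 * (√(m : ℝ))⁻¹)) hab]
          exact sum_congr rfl fun m _ => by ring
      _ ≤ 2 * (√a)⁻¹ := by linarith [show 0 ≤ 2 * (√(b : ℝ))⁻¹ by positivity]
  · rw [Ico_eq_empty_of_le hab.le, sum_empty]
    positivity

theorem sum_inv_add_add_one_mul_inv_sqrt_le (n : ℕ) (F : Finset ℕ) :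
    ∑ m ∈ F, (n + m + 1 : ℝ)⁻¹ * (√(m + 1 : ℝ))⁻¹ ≤ 4 * (√(n + 1 : ℝ))⁻¹ := by
  obtain ⟨N, hFN⟩ := F.exists_nat_subset_range
  have head : ∑ m ∈ F with m ≤ n, (n + m + 1 : ℝ)⁻¹ * (√(m + 1 : ℝ))⁻¹
      ≤ 2 * (√(n + 1 : ℝ))⁻¹ :=
    calc ∑ m ∈ F with m ≤ n, (n + m + 1 : ℝ)⁻¹ * (√(m + 1 : ℝ))⁻¹
        ≤ ∑ m ∈ range (n + 1), (n + 1 : ℝ)⁻¹ * (√(m + 1 : ℝ))⁻¹ := by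
          refine sum_le_sum_of_subset_of_nonneg (fun m hm => ?_) (fun _ _ _ => by positivity)
            |>.trans' (sum_le_sum fun m _ => ?_)
          · grind
          · gcongr; linarith [m.cast_nonneg (α := ℝ)]
      _ ≤ (n + 1 : ℝ)⁻¹ * (2 * √(n + 1 : ℝ)) := by
          rw [← mul_sum]
          gcongr
          exact_mod_cast sum_range_inv_sqrt_succ_le (n + 1)
      _ = 2 * (√(n + 1 : ℝ))⁻¹ := by
          field_simp
          rw [Real.sq_sqrt (by positivity)]
  have tail : ∑ m ∈ F with ¬m ≤ n, (n + m + 1 : ℝ)⁻¹ * (√(m + 1 : ℝ))⁻¹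
      ≤ 2 * (√(n + 1 : ℝ))⁻¹ :=
    calc ∑ m ∈ F with ¬m ≤ n, (n + m + 1 : ℝ)⁻¹ * (√(m + 1 : ℝ))⁻¹
        ≤ ∑ m ∈ Ico (n + 1) N, ((m + 1 : ℝ) * √(m + 1))⁻¹ := by
          refine sum_le_sum_of_subset_of_nonneg (fun m hm => ?_) (fun _ _ _ => by positivity)
            |>.trans' (sum_le_sum fun m _ => ?_)
          · have := hFN (mem_filter.1 hm).1
            grind
          · rw [mul_inv]
            gcongr
            linarith [n.cast_nonneg (α := ℝ)]
      _ ≤ 2 * (√(n + 1 : ℝ))⁻¹ := by exact_mod_cast sum_Ico_inv_mul_sqrt_le n.succ_pos N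
  rw [← sum_filter_add_sum_filter_not F (· ≤ n)]
  linarith

theorem hilbert_inequality (F : Finset ℕ) (a : ℕ → ℝ) :
    ∑ n ∈ F, ∑ m ∈ F, (n + m + 1 : ℝ)⁻¹ * a n * a m ≤ 4 * ∑ n ∈ F, a n ^ 2 :=
  sum_sum_mul_le_of_row_sum_le F (fun _ _ => by positivity) (fun n m => by rw [add_comm (n : ℝ)])
    (fun m => by positivity) (fun n _ => sum_inv_add_add_one_mul_inv_sqrt_le n F) a

theorem antitone_of_sq_le_mul_of_bddAbove {f : ℕ → ℝ} (hf0 : ∀ n, 0 ≤ f n)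
    (hf : ∀ n, f (n + 1) ^ 2 ≤ f n * f (n + 2)) (hbdd : BddAbove (Set.range f)) : Antitone f := by
  refine antitone_nat_of_succ_le fun k => ?_
  by_contra! hk
  have hfk : 0 < f k := by
    refine (hf0 k).lt_of_ne fun h => ?_
    have := hf k
    rw [← h, zero_mul] at this
    nlinarith
  set r := f (k + 1) / f k
  have hr : 1 < r := (one_lt_div hfk).2 hk
  have growth (n : ℕ) : f k * r ^ n ≤ f (k + n) ∧ r * f (k + n) ≤ f (k + n + 1) := by
    induction n with
    | zero => simp [r, div_mul_cancel₀ _ hfk.ne']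
    | succ n ih =>
      obtain ⟨h1, h2⟩ := ih
      have hpos : 0 < f (k + n) := (mul_pos hfk (pow_pos (by linarith) n)).trans_le h1
      refine ⟨by rw [pow_succ, ← add_assoc]; nlinarith, ?_⟩
      rw [← add_assoc]
      refine le_of_mul_le_mul_left ?_ hpos
      nlinarith [hf (k + n), hf0 (k + n + 1)]
  obtain ⟨M, hM⟩ := hbdd
  obtain ⟨n, hn⟩ := pow_unbounded_of_one_lt (M / f k) hr
  rw [div_lt_iff₀ hfk] at hn
  linarith [(growth n).1, hM ⟨k + n, rfl⟩]

section Bessel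

variable {H : Type*} [NormedAddCommGroup H] [InnerProductSpace ℂ H] {ι : Type*}

theorem norm_sq_eq_norm_inner_self (v : H) : ‖v‖ ^ 2 = ‖(inner ℂ v v : ℂ)‖ := by
  rw [← inner_self_eq_norm_sq (𝕜 := ℂ), inner_self_re_eq_norm]

theorem IsBesselSequenceWith.norm_sq_le {y : ι → H} {C : ℝ} (hy : IsBesselSequenceWith y C)
    (hC : 0 ≤ C) (j : ι) : ‖y j‖ ^ 2 ≤ C := by
  have h := hy (y j) {j}
  rw [sum_singleton, ← norm_sq_eq_norm_inner_self, sq (‖y j‖ ^ 2)] at h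
  rcases (sq_nonneg ‖y j‖).eq_or_lt with h0 | h0
  · rwa [← h0]
  · exact le_of_mul_le_mul_right h h0

theorem IsBesselSequenceWith.of_norm_sum_smul_sq_le {y : ι → H} {B : ℝ} (hB : 0 ≤ B)
    (h : ∀ (F : Finset ι) (c : ι → ℂ), ‖∑ j ∈ F, c j • y j‖ ^ 2 ≤ B * ∑ j ∈ F, ‖c j‖ ^ 2) :
    IsBesselSequenceWith y B := by
  intro v F
  set S := ∑ j ∈ F, ‖(inner ℂ v (y j) : ℂ)‖ ^ 2
  set w := ∑ j ∈ F, (starRingEnd ℂ) (inner ℂ v (y j)) • y j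
  have hS : S ≤ ‖v‖ * ‖w‖ :=
    calc S = ‖(inner ℂ v w : ℂ)‖ := by
          simp only [w, S, inner_sum, inner_smul_right, RCLike.conj_mul]
          norm_cast
          rw [abs_of_nonneg (by positivity)]
      _ ≤ ‖v‖ * ‖w‖ := norm_inner_le_norm v w
  have hw : ‖w‖ ^ 2 ≤ B * S := by
    simpa only [RCLike.norm_conj] using h F fun j => (starRingEnd ℂ) (inner ℂ v (y j))
  rcases (show 0 ≤ S by positivity).eq_or_lt with h0 | h0
  · rw [← h0]
    positivity
  · refine le_of_mul_le_mul_right ?_ h0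
    calc S * S ≤ ‖v‖ ^ 2 * ‖w‖ ^ 2 := by nlinarith
      _ ≤ ‖v‖ ^ 2 * (B * S) := by gcongr
      _ = B * ‖v‖ ^ 2 * S := by ring

theorem norm_sum_smul_sq_le (F : Finset ι) (c : ι → ℂ) (y : ι → H) :
    ‖∑ j ∈ F, c j • y j‖ ^ 2 ≤ ∑ i ∈ F, ∑ j ∈ F, ‖(inner ℂ (y i) (y j) : ℂ)‖ * ‖c i‖ * ‖c j‖ := by
  rw [norm_sq_eq_norm_inner_self, sum_inner]
  refine (norm_sum_le _ _).trans (sum_le_sum fun i _ => ?_)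
  rw [inner_sum]
  refine (norm_sum_le _ _).trans (sum_le_sum fun j _ => ?_)
  rw [inner_smul_left, inner_smul_right, norm_mul, norm_mul, RCLike.norm_conj]
  exact le_of_eq (by ring)

theorem IsBesselSequenceWith.of_norm_inner_le {y : ℕ → H} {K : ℝ}
    (h : ∀ n m : ℕ, ‖(inner ℂ (y n) (y m) : ℂ)‖ ≤ K / (n + m + 1)) :
    IsBesselSequenceWith y (4 * K) := by
  have hK : 0 ≤ K := by simpa using (norm_nonneg _).trans (h 0 0)
  refine .of_norm_sum_smul_sq_le (by positivity) fun F c => ?_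
  calc ‖∑ j ∈ F, c j • y j‖ ^ 2
      ≤ ∑ i ∈ F, ∑ j ∈ F, ‖(inner ℂ (y i) (y j) : ℂ)‖ * ‖c i‖ * ‖c j‖ := norm_sum_smul_sq_le ..
    _ ≤ ∑ i ∈ F, ∑ j ∈ F, K / (i + j + 1) * ‖c i‖ * ‖c j‖ := by gcongr with i _ j _; exact h i j
    _ = K * ∑ i ∈ F, ∑ j ∈ F, (i + j + 1 : ℝ)⁻¹ * ‖c i‖ * ‖c j‖ := by
      simp only [mul_sum, div_eq_mul_inv, mul_assoc]
    _ ≤ K * (4 * ∑ i ∈ F, ‖c i‖ ^ 2) := by gcongr; exact hilbert_inequality F _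
    _ = 4 * K * ∑ i ∈ F, ‖c i‖ ^ 2 := by ring

end Bessel

section SelfAdjoint

variable {H : Type*} [NormedAddCommGroup H] [InnerProductSpace ℂ H] [CompleteSpace H]
  {A : H →L[ℂ] H} {C : ℝ}

theorem IsSelfAdjoint.inner_pow_apply_pow_apply (hA : IsSelfAdjoint A) (x : H) (n m : ℕ) :
    (inner ℂ ((A ^ n) x) ((A ^ m) x) : ℂ) = inner ℂ ((A ^ (n + m)) x) x := by
  have h := (hA.pow m).isSymmetric ((A ^ n) x) x
  simp only [ContinuousLinearMap.coe_coe] at h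
  rw [← h, ← mul_apply_eq_comp, ← pow_add, add_comm m n]

theorem IsSelfAdjoint.norm_inner_pow_apply_pow_apply_of_add_eq (hA : IsSelfAdjoint A) (x : H)
    {n m k : ℕ} (h : n + m = k + k) :
    ‖(inner ℂ ((A ^ n) x) ((A ^ m) x) : ℂ)‖ = ‖(A ^ k) x‖ ^ 2 := by
  rw [hA.inner_pow_apply_pow_apply, h, ← hA.inner_pow_apply_pow_apply,
    norm_sq_eq_norm_inner_self]

theorem IsSelfAdjoint.norm_pow_succ_apply_sq_le (hA : IsSelfAdjoint A) (x : H) (n : ℕ) :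
    ‖(A ^ (n + 1)) x‖ ^ 2 ≤ ‖(A ^ n) x‖ * ‖(A ^ (n + 2)) x‖ := by
  rw [← hA.norm_inner_pow_apply_pow_apply_of_add_eq x (by ring : n + (n + 2) = (n + 1) + (n + 1))]
  exact norm_inner_le_norm _ _

variable {x : H}

theorem IsSelfAdjoint.antitone_norm_pow_apply (hA : IsSelfAdjoint A)
    (hB : IsBesselSequenceWith (fun k => (A ^ k) x) C) (hC : 0 ≤ C) :
    Antitone fun n => ‖(A ^ n) x‖ :=
  antitone_of_sq_le_mul_of_bddAbove (fun _ => norm_nonneg _) (hA.norm_pow_succ_apply_sq_le x)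
    ⟨√C, by rintro _ ⟨n, rfl⟩; exact Real.le_sqrt_of_sq_le (hB.norm_sq_le hC n)⟩

-- In the Bessel inequality at `v = A^k x`, each of the `k / 2 + 1` terms `j = k - 2i` equals
-- `‖A^(k-i) x‖⁴ ≥ ‖A^k x‖⁴`.
theorem IsSelfAdjoint.succ_mul_norm_pow_apply_sq_le (hA : IsSelfAdjoint A)
    (hB : IsBesselSequenceWith (fun k => (A ^ k) x) C) (hC : 0 ≤ C) (k : ℕ) :
    (k + 1 : ℝ) * ‖(A ^ k) x‖ ^ 2 ≤ 2 * C := by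
  set F := (range (k / 2 + 1)).image fun i => k - 2 * i
  have hcard : #F = k / 2 + 1 := by
    refine (card_image_of_injOn fun a ha b hb hab => ?_).trans (card_range _)
    simp only [coe_range, Set.mem_Iio] at ha hb
    omega
  have hterm : ∀ j ∈ F, (‖(A ^ k) x‖ ^ 2) ^ 2 ≤ ‖(inner ℂ ((A ^ k) x) ((A ^ j) x) : ℂ)‖ ^ 2 := by
    intro j hj
    obtain ⟨i, hi, rfl⟩ := mem_image.1 hj
    rw [mem_range] at hi
    rw [hA.norm_inner_pow_apply_pow_apply_of_add_eq x
      (by omega : k + (k - 2 * i) = (k - i) + (k - i))]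
    gcongr
    exact hA.antitone_norm_pow_apply hB hC (by omega : k - i ≤ k)
  have hsum : ((k / 2 + 1 : ℕ) : ℝ) * ‖(A ^ k) x‖ ^ 2 * ‖(A ^ k) x‖ ^ 2 ≤ C * ‖(A ^ k) x‖ ^ 2 :=
    calc ((k / 2 + 1 : ℕ) : ℝ) * ‖(A ^ k) x‖ ^ 2 * ‖(A ^ k) x‖ ^ 2
        = ∑ _j ∈ F, (‖(A ^ k) x‖ ^ 2) ^ 2 := by rw [sum_const, hcard, nsmul_eq_mul]; ring
      _ ≤ ∑ j ∈ F, ‖(inner ℂ ((A ^ k) x) ((A ^ j) x) : ℂ)‖ ^ 2 := sum_le_sum hterm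
      _ ≤ C * ‖(A ^ k) x‖ ^ 2 := hB _ F
  have hk : (k + 1 : ℝ) ≤ 2 * ((k / 2 + 1 : ℕ) : ℝ) := by
    exact_mod_cast (by omega : k + 1 ≤ 2 * (k / 2 + 1))
  rcases (sq_nonneg ‖(A ^ k) x‖).eq_or_lt with h0 | h0
  · rw [← h0]
    linarith
  · nlinarith [le_of_mul_le_mul_right hsum h0]

theorem IsSelfAdjoint.norm_inner_pow_apply_le (hA : IsSelfAdjoint A)
    (hB : IsBesselSequenceWith (fun k => (A ^ k) x) C) (hC : 0 ≤ C) {k : ℕ} (hk : 1 ≤ k) :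
    ‖(inner ℂ ((A ^ k) x) x : ℂ)‖ ≤ 4 * C / k := by
  set j := k / 2
  have hkj : (k : ℝ) ≤ 2 * (j + 1) := by exact_mod_cast (by omega : k ≤ 2 * (j + 1))
  calc ‖(inner ℂ ((A ^ k) x) x : ℂ)‖ = ‖(inner ℂ ((A ^ (k - j)) x) ((A ^ j) x) : ℂ)‖ := by
        rw [hA.inner_pow_apply_pow_apply, Nat.sub_add_cancel (Nat.div_le_self k 2)]
    _ ≤ ‖(A ^ (k - j)) x‖ * ‖(A ^ j) x‖ := norm_inner_le_norm _ _
    _ ≤ ‖(A ^ j) x‖ * ‖(A ^ j) x‖ := by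
        gcongr
        exact hA.antitone_norm_pow_apply hB hC (by omega : j ≤ k - j)
    _ ≤ 2 * C / (j + 1) := by
        rw [le_div_iff₀ (by positivity)]
        linarith [hA.succ_mul_norm_pow_apply_sq_le hB hC j]
    _ ≤ 4 * C / k := by
        rw [div_le_div_iff₀ (by positivity) (by exact_mod_cast hk)]
        nlinarith

theorem IsSelfAdjoint.norm_inner_pow_apply_pow_apply_le (hA : IsSelfAdjoint A) (hC : 0 ≤ C)
    (hx : ∀ k : ℕ, 1 ≤ k → ‖(inner ℂ ((A ^ k) x) x : ℂ)‖ ≤ C / k) (n m : ℕ) :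
    ‖(inner ℂ ((A ^ n) x) ((A ^ m) x) : ℂ)‖ ≤ (‖x‖ ^ 2 + 2 * C) / (n + m + 1) := by
  rw [hA.inner_pow_apply_pow_apply]
  rcases Nat.eq_zero_or_pos (n + m) with h | h
  · obtain ⟨rfl, rfl⟩ : n = 0 ∧ m = 0 := by omega
    simp only [add_zero, pow_zero, one_apply_eq_self, CharP.cast_eq_zero, zero_add, div_one,
      ← norm_sq_eq_norm_inner_self]
    linarith
  · have hnm : (1 : ℝ) ≤ n + m := by exact_mod_cast h
    calc ‖(inner ℂ ((A ^ (n + m)) x) x : ℂ)‖ ≤ C / (n + m) := by exact_mod_cast hx _ h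
      _ ≤ 2 * C / (n + m + 1) := by
          rw [div_le_div_iff₀ (by positivity) (by positivity)]
          nlinarith
      _ ≤ (‖x‖ ^ 2 + 2 * C) / (n + m + 1) := by gcongr; nlinarith [sq_nonneg ‖x‖]

end SelfAdjoint

theorem stmt_7 {H : Type*} [NormedAddCommGroup H] [InnerProductSpace ℂ H] [CompleteSpace H]
    (A : H →L[ℂ] H) (hA : IsSelfAdjoint A) (x : H) :
    (∃ C > 0, IsBesselSequenceWith (fun k : ℕ => (A ^ k) x) C) ↔
      (∃ C > 0, ∀ k : ℕ, 1 ≤ k → ‖(inner ℂ ((A ^ k) x) x : ℂ)‖ ≤ C / k) := by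
  constructor
  · rintro ⟨C, hC, hB⟩
    exact ⟨4 * C, by positivity, fun k hk => hA.norm_inner_pow_apply_le hB hC.le hk⟩
  · rintro ⟨C, hC, hx⟩
    exact ⟨4 * (‖x‖ ^ 2 + 2 * C), by positivity,
      .of_norm_inner_le (hA.norm_inner_pow_apply_pow_apply_le hC.le hx)⟩
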